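/- Let a > 0 and define B(t) = e^{-a t}. Suppose g : [T₀, T] → ℝ is continuous, g(T) = 0, and whenever g(s) ≤ B(s) for all s in some subinterval [t₁, T], it follows that g(s)² ≤ (C/a) e^{-2 a s} for all s ∈ [t₁, T], where C > 0 is a fixed constant. If a > 4C, then g(t) ≤ (1/2) e^{-a t} for all t ∈ [T₀, T]. -/

import Mathlib

/-!
Let `U` be the set of times in `[T₀, T]` where `g` reaches the weak bound `e^{-as}`, and suppose it
is nonempty with supremum `u`. Past `u` the weak bound holds strictly, so the bootstrap hypothesis
improves it to `g ≤ ½ e^{-as}` on `(u, T]`; by continuity this persists at `u`, contradicting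
`u ∈ U`. Hence the weak bound holds on all of `[T₀, T]`, and one more application of the bootstrap
hypothesis gives `g² ≤ (C/a) e^{-2as} < (½ e^{-as})²` since `C/a < 1/4`.
-/

open Set Real

lemma abs_lt_half_of_sq_le_mul_sq {x b c : ℝ} (hb : 0 < b) (hc : c < 1 / 4)
    (h : x ^ 2 ≤ c * b ^ 2) : |x| < b / 2 :=
  abs_lt_of_sq_lt_sq (by nlinarith [pow_pos hb 2]) (by positivity)

section Bootstrap

variable {T₀ T : ℝ} {g S W : ℝ → ℝ}

lemma forall_Icc_lt_of_bootstrap (hg : ContinuousOn g (Icc T₀ T))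
    (hS : ContinuousOn S (Icc T₀ T)) (hW : ContinuousOn W (Icc T₀ T))
    (hSW : ∀ s ∈ Icc T₀ T, S s < W s) (hgT : g T < W T)
    (himp : ∀ t ∈ Icc T₀ T, (∀ s ∈ Icc t T, g s ≤ W s) → g t ≤ S t) :
    ∀ t ∈ Icc T₀ T, g t < W t := by
  by_contra! ⟨t, ht, hWt⟩
  set U := {s ∈ Icc T₀ T | W s ≤ g s}
  have hU_bdd : BddAbove U := ⟨T, fun s hs => hs.1.2⟩
  have hu : sSup U ∈ U := (isClosed_Icc.isClosed_le hW hg).csSup_mem ⟨t, ht, hWt⟩ hU_bdd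
  set u := sSup U
  have hlt : ∀ s ∈ Ioc u T, g s < W s := fun s hs =>
    lt_of_not_ge fun hWs => (le_csSup hU_bdd ⟨⟨hu.1.1.trans hs.1.le, hs.2⟩, hWs⟩).not_gt hs.1
  have huT : u ≠ T := fun h => (hu.2.trans_lt (h ▸ hgT)).false
  have hgS : ∀ s ∈ Ioc u T, g s ≤ S s := fun s hs =>
    himp s ⟨hu.1.1.trans hs.1.le, hs.2⟩ fun r hr => (hlt r ⟨hs.1.trans_le hr.1, hr.2⟩).le
  have hsub : closure (Ioc u T) ⊆ Icc T₀ T := by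
    rw [closure_Ioc huT]; exact Icc_subset_Icc_left hu.1.1
  have hu_mem : u ∈ closure (Ioc u T) := by
    rw [closure_Ioc huT]; exact ⟨le_rfl, hu.1.2⟩
  have hgSu : g u ≤ S u := le_on_closure hgS (hg.mono hsub) (hS.mono hsub) hu_mem
  exact (hgSu.trans_lt (hSW u hu.1)).not_ge hu.2

lemma forall_Icc_le_of_bootstrap (hg : ContinuousOn g (Icc T₀ T))
    (hS : ContinuousOn S (Icc T₀ T)) (hW : ContinuousOn W (Icc T₀ T))
    (hSW : ∀ s ∈ Icc T₀ T, S s < W s) (hgT : g T < W T)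
    (himp : ∀ t ∈ Icc T₀ T, (∀ s ∈ Icc t T, g s ≤ W s) → g t ≤ S t) :
    ∀ t ∈ Icc T₀ T, g t ≤ S t := fun t ht =>
  himp t ht fun s hs =>
    (forall_Icc_lt_of_bootstrap hg hS hW hSW hgT himp s ⟨ht.1.trans hs.1, hs.2⟩).le

end Bootstrap

theorem bootstrap_closing_general (T₀ T a C : ℝ) (ha : 0 < a)
    (g : ℝ → ℝ) (hg : ContinuousOn g (Set.Icc T₀ T)) (hgT : g T = 0)
    (hboot : ∀ t₁ ∈ Set.Icc T₀ T,
      (∀ s ∈ Set.Icc t₁ T, g s ≤ Real.exp (-a * s)) →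
      ∀ s ∈ Set.Icc t₁ T, g s ^ 2 ≤ (C / a) * Real.exp (-2 * a * s))
    (haC : 4 * C < a) :
    ∀ t ∈ Set.Icc T₀ T, g t ≤ (1 / 2) * Real.exp (-a * t) := by
  have hCa : C / a < 1 / 4 := by rw [div_lt_iff₀ ha]; linarith
  refine forall_Icc_le_of_bootstrap (W := fun s => exp (-a * s)) hg (by fun_prop) (by fun_prop)
    (fun s _ => by linarith [exp_pos (-a * s)]) (by simp [hgT, exp_pos]) fun t ht hW => ?_
  have hsq := hboot t ht hW t ⟨le_rfl, ht.2⟩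
  rw [show exp (-2 * a * t) = exp (-a * t) ^ 2 by rw [sq, ← exp_add]; ring_nf] at hsq
  linarith [le_abs_self (g t), abs_lt_half_of_sq_le_mul_sq (exp_pos _) hCa hsq]

/-- Closing the bootstrap: if `g(T) = 0` and the bootstrap assumption
`g ≤ e^{-as}` on `[t₁,T]` always improves to `g² ≤ (C/a) e^{-2as}` there,
then for `a > 4C` one has `g ≤ (1/2) e^{-at}` on `[T₀, T]`. -/
theorem bootstrap_closing (T₀ T a C : ℝ) (hT : T₀ ≤ T) (ha : 0 < a) (hC : 0 < C)
    (g : ℝ → ℝ) (hg : ContinuousOn g (Set.Icc T₀ T)) (hgT : g T = 0)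
    (hboot : ∀ t₁ ∈ Set.Icc T₀ T,
      (∀ s ∈ Set.Icc t₁ T, g s ≤ Real.exp (-a * s)) →
      ∀ s ∈ Set.Icc t₁ T, g s ^ 2 ≤ (C / a) * Real.exp (-2 * a * s))
    (haC : 4 * C < a) :
    ∀ t ∈ Set.Icc T₀ T, g t ≤ (1 / 2) * Real.exp (-a * t) :=
  bootstrap_closing_general T₀ T a C ha g hg hgT hboot haC
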